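/- arXiv:2205.14984 — 5 statements merged into one kernel-verified Lean document; each statement's English description precedes it below -/
import Mathlib

section
/- Let G be a finite group, K ≤ G a subgroup and y ∈ K. Assume (1) N_G(K) = K, and (2) for every g ∈ G, y ∈ K^g implies K^g = K. Then for any x ∈ G with x ∉ K and any n ≥ 1, the iterated Engel commutator [x,_n y] is not the identity. -/
/-!
If `[z, y] ∈ K` with `y ∈ K`, then `y ∈ K^z`, so by the hypothesis on `y` the element `z`
normalizes `K`, hence lies in `K`. Inducting on `n`, `[x,_n y] ∈ K` forces `x ∈ K`; since
`1 ∈ K`, a trivial Engel commutator would put `x` in `K`.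
-/

/-- The iterated Engel commutator, with `[x,y] = x⁻¹y⁻¹xy`. -/
def engel {G : Type*} [Group G] (x y : G) : ℕ → G
  | 0 => x
  | n + 1 => (engel x y n)⁻¹ * y⁻¹ * engel x y n * y

namespace Subgroup

variable {G : Type*} [Group G] {K : Subgroup G} {y : G}

theorem mem_of_conj_mem_of_normalizer_eq
    (hN : normalizer (K : Set G) = K)
    (hconj : ∀ g : G, g * y * g⁻¹ ∈ K → ∀ k : G, (g * k * g⁻¹ ∈ K ↔ k ∈ K))
    {z : G} (hz : z⁻¹ * y * z ∈ K) : z ∈ K := by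
  have hzconj : ∀ k : G, z⁻¹ * k * z⁻¹⁻¹ ∈ K ↔ k ∈ K := hconj z⁻¹ (by rwa [inv_inv])
  have hnorm : z⁻¹ ∈ normalizer (K : Set G) :=
    mem_normalizer_iff.mpr fun k => (hzconj k).symm
  rw [hN] at hnorm
  exact K.inv_mem_iff.mp hnorm

theorem mem_of_commutator_mem_of_normalizer_eq (hy : y ∈ K)
    (hN : normalizer (K : Set G) = K)
    (hconj : ∀ g : G, g * y * g⁻¹ ∈ K → ∀ k : G, (g * k * g⁻¹ ∈ K ↔ k ∈ K))
    {z : G} (hz : z⁻¹ * y⁻¹ * z * y ∈ K) : z ∈ K := by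
  have hz' : z⁻¹ * y⁻¹ * z ∈ K := by
    simpa using K.mul_mem hz (K.inv_mem hy)
  exact mem_of_conj_mem_of_normalizer_eq hN hconj (by simpa [mul_assoc] using K.inv_mem hz')

theorem mem_of_engel_mem_of_normalizer_eq (hy : y ∈ K)
    (hN : normalizer (K : Set G) = K)
    (hconj : ∀ g : G, g * y * g⁻¹ ∈ K → ∀ k : G, (g * k * g⁻¹ ∈ K ↔ k ∈ K))
    {x : G} : ∀ {n : ℕ}, engel x y n ∈ K → x ∈ K
  | 0, h => h
  | _ + 1, h =>
    mem_of_engel_mem_of_normalizer_eq hy hN hconj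
      (mem_of_commutator_mem_of_normalizer_eq hy hN hconj h)

end Subgroup

theorem engel_ne_one_of_not_mem_general {G : Type*} [Group G]
    (K : Subgroup G) (y : G) (hy : y ∈ K)
    (h1 : Subgroup.normalizer (K : Set G) = K)
    (h2 : ∀ g : G, g * y * g⁻¹ ∈ K → ∀ k : G, (g * k * g⁻¹ ∈ K ↔ k ∈ K))
    (x : G) (hx : x ∉ K) :
    ∀ n : ℕ, 1 ≤ n → engel x y n ≠ 1 := by
  intro n _ hn
  exact hx (Subgroup.mem_of_engel_mem_of_normalizer_eq hy h1 h2 (hn ▸ K.one_mem))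

/-- Let `K ≤ G` with `N_G(K) = K`, `y ∈ K`, and suppose `y ∈ K^g` implies
`K^g = K` (where `K^g = g⁻¹Kg`). Then for `x ∉ K`, no iterated Engel
commutator `[x,_n y]` (`n ≥ 1`) is trivial. -/
theorem engel_ne_one_of_not_mem {G : Type*} [Group G] [Finite G]
    (K : Subgroup G) (y : G) (hy : y ∈ K)
    (h1 : Subgroup.normalizer (K : Set G) = K)
    (h2 : ∀ g : G, g * y * g⁻¹ ∈ K → ∀ k : G, (g * k * g⁻¹ ∈ K ↔ k ∈ K))
    (x : G) (hx : x ∉ K) :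
    ∀ n : ℕ, 1 ≤ n → engel x y n ≠ 1 :=
  engel_ne_one_of_not_mem_general K y hy h1 h2 x hx
end

section
/- Let q be a prime power with q ≡ 5 (mod 8), and let i ∈ F_q with i² = -1. Then there exists α ∈ F_q such that α is a nonzero square, α - i is a nonzero square, and α - 2i is not a square in F_q. -/
/-!
Let `χ` be the quadratic character of `F`. From `q ≡ 5 (mod 8)` we get `χ 2 = -1` and
`χ (-1) = 1`, and `2 i = (1 + i)²` then gives `χ i = -1`. Hence `α = i (u + 1)` works as soon as
`χ (u - 1) = 1` and `χ u = χ (u + 1) = -1`.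

If there were no such `u`, two consecutive nonsquares `n, n + 1` in the prime field would make
`n - 1` a nonsquare too, and descending would reach the square `1`. So after every nonsquare of
the prime field comes a square; applied to the nonsquares `2 (2^k - 1)` this shows inductively
that every `2^k - 1` with `k ≥ 1` is a nonzero square, which fails for `k = q - 1`.
-/

section QuadraticChar

variable {F : Type*} [Field F] [Fintype F] [DecidableEq F]

local notation "χ" => quadraticChar F

theorem ne_zero_and_isSquare_of_quadraticChar_eq_one {a : F} (ha : χ a = 1) :
    a ≠ 0 ∧ IsSquare a := by
  have ha₀ : a ≠ 0 := by
    rintro rfl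
    simp at ha
  exact ⟨ha₀, (quadraticChar_one_iff_isSquare ha₀).mp ha⟩

theorem quadraticChar_eq_neg_one_of_sq_eq_neg_one (h2 : χ 2 = -1) {i : F} (hi : i ^ 2 = -1) :
    χ i = -1 := by
  have hsq : (1 + i) ^ 2 = 2 * i := by linear_combination hi
  have h1i : 1 + i ≠ 0 := by
    intro h
    have h2₀ : (2 : F) = 0 := by linear_combination hi - (i - 1) * h
    simp [h2₀] at h2
  have := quadraticChar_sq_one' h1i
  rw [hsq, map_mul, h2] at this
  linarith

theorem quadraticChar_natCast_add_one_ne_neg_one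
    (h : ∀ u : F, χ (u - 1) = 1 → χ u = -1 → χ (u + 1) ≠ -1) (m : ℕ) (hm : χ (m : F) = -1) :
    χ ((m : F) + 1) ≠ -1 := by
  induction m with
  | zero => simp at hm
  | succ m ih =>
    intro hm₂
    push_cast at hm hm₂
    have hm₀ : (m : F) ≠ 0 := by
      rintro h0
      simp [h0] at hm
    have hm₁ : χ (m : F) ≠ 1 := fun hm₁ ↦ h ((m : F) + 1) (by simpa using hm₁) hm hm₂
    exact ih ((quadraticChar_eq_neg_one_iff_not_one hm₀).mpr hm₁) hm

theorem quadraticChar_two_pow_sub_one_eq_one (h2 : χ 2 = -1) (hneg : χ (-1) = 1)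
    (h : ∀ u : F, χ (u - 1) = 1 → χ u = -1 → χ (u + 1) ≠ -1) (n : ℕ) :
    χ ((2 ^ (n + 1) - 1 : ℕ) : F) = 1 := by
  induction n with
  | zero => simp
  | succ n ih =>
    set y := 2 ^ (n + 1) - 1
    have hy : 2 ^ (n + 1 + 1) - 1 = 2 * y + 1 := by
      have := Nat.one_le_two_pow (n := n + 1)
      rw [pow_succ]
      omega
    have h2y : χ ((2 * y : ℕ) : F) = -1 := by
      rw [Nat.cast_mul, map_mul, Nat.cast_ofNat, h2, ih, mul_one]
    have hy₀ : ((2 * y : ℕ) : F) + 1 ≠ 0 := by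
      intro h0
      rw [eq_neg_of_add_eq_zero_left h0, hneg] at h2y
      norm_num at h2y
    rw [hy, Nat.cast_succ]
    exact (quadraticChar_dichotomy hy₀).resolve_right
      (quadraticChar_natCast_add_one_ne_neg_one h _ h2y)

theorem exists_quadraticChar_sub_one_eq_one_eq_neg_one_add_one_eq_neg_one
    (h2 : χ 2 = -1) (hneg : χ (-1) = 1) :
    ∃ u : F, χ (u - 1) = 1 ∧ χ u = -1 ∧ χ (u + 1) = -1 := by
  by_contra! h
  have h2₀ : (2 : F) ≠ 0 := by
    rintro h0
    simp [h0] at h2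
  have hcard := Fintype.one_lt_card (α := F)
  have := quadraticChar_two_pow_sub_one_eq_one h2 hneg h (Fintype.card F - 2)
  rw [show Fintype.card F - 2 + 1 = Fintype.card F - 1 by omega, Nat.cast_sub Nat.one_le_two_pow,
    Nat.cast_pow, Nat.cast_ofNat, FiniteField.pow_card_sub_one_eq_one 2 h2₀] at this
  simp at this

end QuadraticChar

/-- If `q ≡ 5 (mod 8)` and `i² = -1` in `F_q`, then there exists `α ∈ F_q`
which is a nonzero square, with `α - i` a nonzero square and `α - 2i` not a
square. -/
theorem exists_alpha_of_card_mod_eight_eq_five {F : Type*} [Field F] [Fintype F]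
    (hq : Fintype.card F % 8 = 5) (i : F) (hi : i ^ 2 = -1) :
    ∃ α : F, (α ≠ 0 ∧ IsSquare α) ∧ (α - i ≠ 0 ∧ IsSquare (α - i)) ∧
      ¬ IsSquare (α - 2 * i) := by
  classical
  have h2 : quadraticChar F 2 = -1 :=
    quadraticChar_neg_one_iff_not_isSquare.mpr fun h ↦ (FiniteField.isSquare_two_iff.mp h).2 hq
  have hneg : quadraticChar F (-1) = 1 :=
    (quadraticChar_one_iff_isSquare (neg_ne_zero.mpr one_ne_zero)).mpr
      (FiniteField.isSquare_neg_one_iff.mpr (by omega))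
  have hχi := quadraticChar_eq_neg_one_of_sq_eq_neg_one h2 hi
  obtain ⟨u, hu_sub, hu, hu_add⟩ :=
    exists_quadraticChar_sub_one_eq_one_eq_neg_one_add_one_eq_neg_one h2 hneg
  refine ⟨i * (u + 1), ne_zero_and_isSquare_of_quadraticChar_eq_one ?_,
    ne_zero_and_isSquare_of_quadraticChar_eq_one ?_, quadraticChar_neg_one_iff_not_isSquare.mp ?_⟩
  · rw [map_mul, hχi, hu_add]; norm_num
  · rw [show i * (u + 1) - i = i * u by ring, map_mul, hχi, hu]; norm_num
  · rw [show i * (u + 1) - 2 * i = i * (u - 1) by ring, map_mul, hχi, hu_sub]; norm_num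
end

section
/- Let q ≡ 3 (mod 4) be an odd prime power, let z = [[0,1],[-1,0]] ∈ SL₂(F_q), and let e₁ = (1,0) ∈ F_q². Then the set { e₁ · (g⁻¹ z g) : g ∈ SL₂(F_q) } equals F_q² minus the line spanned by e₁. -/
/-!
Put `w := e₁ g⁻¹`, so that `e₁ = w g` and `e₁ (g⁻¹ z g) = (w z) g`. As `g` is invertible, the
orbit vector lies on the line through `e₁` exactly when `w` is a left eigenvector of `z`, and `z`
has none because `-1` is not a square when `q ≡ 3 (mod 4)`. Conversely, for `v = (a, b)` with
`b ≠ 0` write `b = x² + y²`; the matrix `g` sending `(x, y) ↦ e₁` and `(x, y) z = (-y, x) ↦ v`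
has determinant `b / (x² + y²) = 1`, so `w = (x, y)` and `e₁ (g⁻¹ z g) = v`.
-/

open Polynomial Matrix Submodule

theorem FiniteField.exists_sq_add_sq_eq {F : Type*} [Field F] [Fintype F] (x : F) :
    ∃ a b : F, a ^ 2 + b ^ 2 = x := by
  by_cases hF : ringChar F = 2
  · obtain ⟨a, rfl⟩ := FiniteField.isSquare_of_char_two hF x
    exact ⟨a, 0, by ring⟩
  · obtain ⟨a, b, hab⟩ := exists_root_sum_quadratic (degree_X_pow 2)
      (degree_X_pow_sub_C two_pos x) (odd_card_of_char_ne_two hF)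
    exact ⟨a, b, by simpa [← add_sub_assoc, sub_eq_zero] using hab⟩

namespace Matrix

variable {n R K : Type*}

theorem vec2_vecMul_of [NonUnitalNonAssocSemiring R] (x y a b c d : R) :
    ![x, y] ᵥ* !![a, b; c, d] = ![x * a + y * c, x * b + y * d] := by
  simp

theorem vecMul_inv_mul_mul_of_vecMul_eq [Fintype n] [DecidableEq n] [CommRing R]
    {g A : Matrix n n R} (hg : IsUnit g.det) {u w : n → R} (hw : w ᵥ* g = u) :
    u ᵥ* (g⁻¹ * A * g) = (w ᵥ* A) ᵥ* g := by
  subst hw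
  simp only [vecMul_vecMul, ← Matrix.mul_assoc, mul_nonsing_inv _ hg, Matrix.one_mul]

theorem vecMul_mem_span_singleton_vecMul_iff [Fintype n] [DecidableEq n] [Field K]
    {g : Matrix n n K} (hg : IsUnit g) {u w : n → K} :
    u ᵥ* g ∈ span K {w ᵥ* g} ↔ u ∈ span K {w} := by
  simp only [mem_span_singleton, ← smul_vecMul, (vecMul_injective_iff_isUnit.2 hg).eq_iff]

theorem mem_span_singleton_vec2_one_zero_iff [Field K] {v : Fin 2 → K} :
    v ∈ span K {![1, 0]} ↔ v 1 = 0 := by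
  rw [mem_span_singleton]
  refine ⟨fun ⟨c, hc⟩ ↦ by simp [← hc], fun hv ↦ ⟨v 0, ?_⟩⟩
  ext i; fin_cases i <;> simp [hv]

theorem eq_zero_of_vecMul_rotation_mem_span_singleton [Field K] (hK : ¬ IsSquare (-1 : K))
    {w : Fin 2 → K} (hw : w ᵥ* !![0, 1; -1, 0] ∈ span K {w}) : w = 0 := by
  obtain ⟨c, hc⟩ := mem_span_singleton.1 hw
  have h0 : c * w 0 = -w 1 := by simpa [vecMul, dotProduct] using congrFun hc 0
  have h1 : c * w 1 = w 0 := by simpa [vecMul, dotProduct] using congrFun hc 1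
  have hc2 : c ^ 2 + 1 ≠ 0 := fun h ↦ hK ⟨c, by linear_combination -h⟩
  have hcw : ∀ i, (c ^ 2 + 1) * w i = 0 := Fin.forall_fin_two.2
    ⟨by linear_combination c * h0 - h1, by linear_combination c * h1 + h0⟩
  ext i
  exact (mul_eq_zero.1 (hcw i)).resolve_left hc2

theorem exists_det_eq_one_vecMul_rotation_eq [Field K] {x y : K} (hxy : x ^ 2 + y ^ 2 ≠ 0)
    (a : K) : ∃ g : Matrix (Fin 2) (Fin 2) K, g.det = 1 ∧ ![x, y] ᵥ* g = ![1, 0] ∧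
      (![x, y] ᵥ* !![0, 1; -1, 0]) ᵥ* g = ![a, x ^ 2 + y ^ 2] := by
  refine ⟨!![(x - a * y) / (x ^ 2 + y ^ 2), -y; (y + a * x) / (x ^ 2 + y ^ 2), x], ?_, ?_, ?_⟩
  · rw [det_fin_two_of]
    field_simp
    ring
  · rw [vec2_vecMul_of]
    exact vec2_eq (by field_simp; ring) (by ring)
  · rw [vec2_vecMul_of, vec2_vecMul_of]
    exact vec2_eq (by field_simp; ring) (by ring)

end Matrix

/-- Let `q ≡ 3 (mod 4)`, `z = !![0,1;-1,0]` and `e₁ = ![1,0]`. Then the set of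
vectors `e₁ ⬝ (g⁻¹ z g)` for `g ∈ SL₂(F_q)` equals `F_q²` minus the line
spanned by `e₁`. -/
theorem vecMul_conj_orbit_eq {F : Type*} [Field F] [Fintype F]
    (hq : Fintype.card F % 4 = 3) :
    {v : Fin 2 → F | ∃ g : Matrix (Fin 2) (Fin 2) F, g.det = 1 ∧
        Matrix.vecMul ![1, 0] (g⁻¹ * !![0, 1; -1, 0] * g) = v} =
      {v : Fin 2 → F | v ∉ Submodule.span F {![(1 : F), 0]}} := by
  have hF : ¬ IsSquare (-1 : F) := by simp [FiniteField.isSquare_neg_one_iff, hq]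
  ext v
  constructor
  · rintro ⟨g, hdet, rfl⟩ hv
    have hg : IsUnit g.det := hdet ▸ isUnit_one
    obtain ⟨w, hw⟩ : ∃ w : Fin 2 → F, w ᵥ* g = ![1, 0] :=
      ⟨![1, 0] ᵥ* g⁻¹, by rw [vecMul_vecMul, nonsing_inv_mul _ hg, vecMul_one]⟩
    rw [vecMul_inv_mul_mul_of_vecMul_eq hg hw, ← hw,
      vecMul_mem_span_singleton_vecMul_iff ((isUnit_iff_isUnit_det g).2 hg)] at hv
    simpa [eq_zero_of_vecMul_rotation_mem_span_singleton hF hv] using congrFun hw 0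
  · intro hv
    obtain ⟨x, y, hxy⟩ := FiniteField.exists_sq_add_sq_eq (v 1)
    have hb : x ^ 2 + y ^ 2 ≠ 0 := hxy ▸ mt mem_span_singleton_vec2_one_zero_iff.2 hv
    obtain ⟨g, hdet, hw, hgv⟩ := exists_det_eq_one_vecMul_rotation_eq hb (v 0)
    refine ⟨g, hdet, ?_⟩
    rw [vecMul_inv_mul_mul_of_vecMul_eq (hdet ▸ isUnit_one) hw, hgv, hxy]
    exact FinVec.etaExpand_eq v
end

section
/- Let m ≥ 3 be odd, q a prime power, and suppose p(x) = x^m - a₁x^{m-1} - ⋯ - a_{m-1}x - 1 is an irreducible polynomial over F_q with constant term -(-1) (i.e., the companion matrix has determinant 1). Let g be the companion matrix of p and, for q odd, let z = diag(-I_{(m-1)/2}, 1, -I_{(m-1)/2}). Then z is an involution in SL_m(F_q) and the commutator [g,z] = g⁻¹zgz is an involution. -/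
/-!
Put `k = (m - 1) / 2`, `D = diagonal d` with `d i = -1` exactly for `i ∈ {k, k + 1}`, and
`c = D + 2 a_{k+1} E_{0,k+1}`. Then `g c = z g z`: rows `0, …, m - 2` of `g` are shifted unit
vectors, which forces rows `1, …, m - 1` of `c`, and the last row `a` of `g` (with `a 0 = 1`)
forces row `0`. As `a 0 = 1`, `g` is invertible, so `[g, z] = c`. Now `D² = 1`, and
`E_{0,k+1}` anticommutes with `D` (since `d 0 = 1`, `d (k + 1) = -1`) and squares to zero,
so `c² = 1`; finally `c k k = -1 ≠ 1` as `q` is odd.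
-/

open Polynomial Matrix

section Diagonal

variable {R : Type*} [Ring R] {n : Type*} [DecidableEq n]

theorem diagonal_ne_one {d : n → R} {l : n} (hl : d l ≠ 1) : diagonal d ≠ 1 := by
  rw [← diagonal_one]
  exact fun h => hl (congrFun (diagonal_injective h) l)

theorem diagonal_add_single_ne_one {d : n → R} {i j l : n} (hij : i ≠ j) (hl : d l ≠ 1)
    (x : R) : diagonal d + single i j x ≠ 1 := by
  intro h
  have hll := congrFun (congrFun h l) l
  rw [Matrix.add_apply, diagonal_apply_eq, one_apply_eq,
    single_apply_of_ne (h := fun h => hij (h.1.trans h.2.symm)), add_zero] at hll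
  exact hl hll

variable [Fintype n]

theorem vecMul_single_apply (v : n → R) (i j l : n) (x : R) :
    (v ᵥ* single i j x) l = if j = l then v i * x else 0 := by
  by_cases h : j = l <;> simp [vecMul, dotProduct, single_apply, h]

theorem diagonal_mul_self_eq_one {d : n → R} (hd : ∀ i, d i * d i = 1) :
    diagonal d * diagonal d = 1 := by
  rw [diagonal_mul_diagonal, funext hd, diagonal_one]

theorem diagonal_mul_single (d : n → R) (i j : n) (x : R) :
    diagonal d * single i j x = single i j (d i * x) := by
  ext k l
  rw [diagonal_mul, single_apply, single_apply]
  split_ifs with h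
  · rw [h.1]
  · rw [mul_zero]

theorem single_mul_diagonal (d : n → R) (i j : n) (x : R) :
    single i j x * diagonal d = single i j (x * d j) := by
  ext k l
  rw [mul_diagonal, single_apply, single_apply]
  split_ifs with h
  · rw [h.2]
  · rw [zero_mul]

theorem diagonal_add_single_mul_self {d : n → R} (hd : ∀ k, d k * d k = 1) {i j : n}
    (hij : i ≠ j) (hi : d i = 1) (hj : d j = -1) (x : R) :
    (diagonal d + single i j x) * (diagonal d + single i j x) = 1 := by
  rw [add_mul, mul_add, mul_add, diagonal_mul_self_eq_one hd, diagonal_mul_single,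
    single_mul_diagonal, single_mul_single_of_ne (h := hij.symm), hi, hj, one_mul, mul_neg_one,
    ← single_neg, add_zero, add_neg_cancel_right]

end Diagonal

theorem det_diagonal_ite_one_neg_one {R : Type*} [CommRing R] {m k : ℕ} (hk : k < m) :
    (diagonal fun i : Fin m => if (i : ℕ) = k then (1 : R) else -1).det = (-1) ^ (m - 1) := by
  rw [det_diagonal, Fintype.prod_eq_mul_prod_compl ⟨k, hk⟩, if_pos rfl, one_mul,
    Finset.prod_congr rfl fun i hi => if_neg fun h => Finset.mem_compl.mp hi
      (Finset.mem_singleton.mpr (Fin.ext h)),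
    Finset.prod_const, Finset.card_compl, Finset.card_singleton, Fintype.card_fin]

section Companion

variable {R : Type*} [CommRing R] {m : ℕ}

def companionMatrix (a : Fin m → R) : Matrix (Fin m) (Fin m) R :=
  of fun i j => if (i : ℕ) + 1 = j then 1 else if (i : ℕ) = m - 1 then a j else 0

theorem companionMatrix_row_of_lt (a : Fin m → R) {i : Fin m} (hi : (i : ℕ) + 1 < m) :
    companionMatrix a i = Pi.single ⟨i + 1, hi⟩ 1 := by
  ext j
  simp only [companionMatrix, of_apply, Pi.single_apply, Fin.ext_iff]
  split_ifs <;> first | rfl | omega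

theorem companionMatrix_row_last (a : Fin m → R) {i : Fin m} (hi : (i : ℕ) = m - 1) :
    companionMatrix a i = a := by
  ext j
  rw [companionMatrix, of_apply, if_neg (by omega), if_pos hi]

theorem companionMatrix_mul_apply_of_lt (a : Fin m → R) (M : Matrix (Fin m) (Fin m) R)
    {i : Fin m} (hi : (i : ℕ) + 1 < m) (j : Fin m) :
    (companionMatrix a * M) i j = M ⟨i + 1, hi⟩ j := by
  rw [mul_apply_eq_vecMul, companionMatrix_row_of_lt a hi, single_one_vecMul, row_apply]

theorem companionMatrix_mul_row_last (a : Fin m → R) (M : Matrix (Fin m) (Fin m) R)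
    {i : Fin m} (hi : (i : ℕ) = m - 1) : (companionMatrix a * M) i = a ᵥ* M := by
  rw [mul_apply_eq_vecMul, companionMatrix_row_last a hi]

/-- A kernel vector is killed coordinate by coordinate: rows `0, …, m - 2` read off its
coordinates `1, …, m - 1`, and then the last row reads `a 0 * v 0 = 0`. -/
theorem det_companionMatrix_ne_zero [IsDomain R] (a : Fin m → R) (h0 : 0 < m)
    (ha : a ⟨0, h0⟩ ≠ 0) : (companionMatrix a).det ≠ 0 := by
  rw [Ne, ← exists_mulVec_eq_zero_iff]
  rintro ⟨v, hv, hgv⟩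
  have htail : ∀ j : Fin m, j ≠ ⟨0, h0⟩ → v j = 0 := by
    intro j hj
    have hj : (j : ℕ) ≠ 0 := fun h => hj (Fin.ext h)
    have hrow := congrFun hgv ⟨j - 1, by omega⟩
    rwa [mulVec, companionMatrix_row_of_lt a (by simp only; omega), single_one_dotProduct,
      Pi.zero_apply, show (⟨j - 1 + 1, _⟩ : Fin m) = j from Fin.ext (by simp only; omega)]
      at hrow
  have hhead : v ⟨0, h0⟩ = 0 := by
    have hrow := congrFun hgv ⟨m - 1, by omega⟩
    rw [mulVec, companionMatrix_row_last a rfl, dotProduct,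
      Finset.sum_eq_single_of_mem _ (Finset.mem_univ _) fun j _ hj => by rw [htail j hj, mul_zero],
      Pi.zero_apply] at hrow
    exact (mul_eq_zero.mp hrow).resolve_left ha
  exact hv (funext fun j => if hj : j = ⟨0, h0⟩ then hj ▸ hhead else htail j hj)

end Companion

section Commutator

variable {R : Type*} [CommRing R] {m k : ℕ}

def companionCommutator (a : Fin m → R) (hk : k + 1 < m) : Matrix (Fin m) (Fin m) R :=
  diagonal (fun i : Fin m => if (i : ℕ) = k ∨ (i : ℕ) = k + 1 then -1 else 1) +
    single (⟨0, by omega⟩ : Fin m) ⟨k + 1, hk⟩ (2 * a ⟨k + 1, hk⟩)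

theorem companionMatrix_mul_companionCommutator (a : Fin m → R) (hk0 : 0 < k)
    (hk : k + 1 < m) (ha : a ⟨0, by omega⟩ = 1) :
    companionMatrix a * companionCommutator a hk =
      diagonal (fun i : Fin m => if (i : ℕ) = k then 1 else -1) * companionMatrix a *
        diagonal (fun i : Fin m => if (i : ℕ) = k then 1 else -1) := by
  ext i j
  rw [mul_diagonal, diagonal_mul]
  rcases Nat.lt_or_ge ((i : ℕ) + 1) m with hi | hi
  · rw [companionMatrix_mul_apply_of_lt a _ hi, companionCommutator, Matrix.add_apply,
      companionMatrix_row_of_lt a hi, diagonal_apply, Pi.single_apply,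
      single_apply_of_row_ne (Fin.ne_of_val_ne (Nat.succ_ne_zero i).symm), add_zero]
    simp only [Fin.ext_iff]
    split_ifs <;> first | omega | simp
  · have hlast : (i : ℕ) = m - 1 := by omega
    rw [companionMatrix_mul_row_last a _ hlast, companionCommutator, vecMul_add, Pi.add_apply,
      vecMul_diagonal, vecMul_single_apply, companionMatrix_row_last a hlast, ha,
      if_neg (show (i : ℕ) ≠ k by omega)]
    by_cases hj : (⟨k + 1, hk⟩ : Fin m) = j
    · subst hj
      simp only [or_true, if_true, if_neg (show k + 1 ≠ k by omega)]
      ring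
    · rw [if_neg hj, add_zero]
      have hj : (j : ℕ) ≠ k + 1 := fun h => hj (Fin.ext h.symm)
      split_ifs <;> first | omega | ring

theorem companionCommutator_mul_self (a : Fin m → R) (hk0 : 0 < k) (hk : k + 1 < m) :
    companionCommutator a hk * companionCommutator a hk = 1 := by
  apply diagonal_add_single_mul_self
  · intro i
    split_ifs <;> simp
  · simp
  · exact if_neg (by rw [Fin.val_mk]; omega)
  · exact if_pos (Or.inr rfl)

theorem companionCommutator_ne_one (hR : (-1 : R) ≠ 1) (a : Fin m → R) (hk : k + 1 < m) :
    companionCommutator a hk ≠ 1 := by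
  apply diagonal_add_single_ne_one (l := ⟨k, by omega⟩)
  · simp
  · rwa [if_pos (Or.inl rfl)]

theorem commutator_companionMatrix_eq {K : Type*} [Field K] (a : Fin m → K) (hk0 : 0 < k)
    (hk : k + 1 < m) (ha : a ⟨0, by omega⟩ = 1) :
    (companionMatrix a)⁻¹ * diagonal (fun i : Fin m => if (i : ℕ) = k then 1 else -1) *
        companionMatrix a * diagonal (fun i : Fin m => if (i : ℕ) = k then 1 else -1) =
      companionCommutator a hk := by
  have hdet := det_companionMatrix_ne_zero a (by omega) (ha ▸ one_ne_zero)
  rw [mul_assoc, mul_assoc, ← mul_assoc (diagonal _) (companionMatrix a),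
    ← companionMatrix_mul_companionCommutator a hk0 hk ha]
  exact nonsing_inv_mul_cancel_left _ _ hdet.isUnit

end Commutator

/-- Let `q` be odd, `m ≥ 3` odd, and let `g` be the companion matrix of an
irreducible polynomial `X^m - a_{m-1}X^{m-1} - ⋯ - a₁X - 1` over `F_q`
(so `g` has `1`'s on the superdiagonal, bottom row `a` with `a 0 = 1`, and
determinant 1). Let `z = diag(-I_{(m-1)/2}, 1, -I_{(m-1)/2})`. Then `z` is an
involution in `SL_m(F_q)` and the commutator `[g,z] = g⁻¹zgz` is an
involution. -/
theorem companion_commutator_involution {F : Type*} [Field F] [Fintype F]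
    (hodd : Odd (Fintype.card F))
    (m : ℕ) (hm : 3 ≤ m) (hmodd : Odd m)
    (a : Fin m → F) (ha : a ⟨0, by omega⟩ = 1)
    (g z : Matrix (Fin m) (Fin m) F)
    (hg : ∀ i j : Fin m, g i j =
      if (i : ℕ) + 1 = (j : ℕ) then 1
      else if (i : ℕ) = m - 1 then a j else 0)
    (hz : ∀ i j : Fin m, z i j =
      if i = j then (if (i : ℕ) = (m - 1) / 2 then 1 else -1) else 0) :
    z.det = 1 ∧ z * z = 1 ∧ z ≠ 1 ∧
      (g⁻¹ * z * g * z) * (g⁻¹ * z * g * z) = 1 ∧ g⁻¹ * z * g * z ≠ 1 := by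
  have hk0 : 0 < (m - 1) / 2 := by omega
  have hk : (m - 1) / 2 + 1 < m := by omega
  have hF : (-1 : F) ≠ 1 := Ring.neg_one_ne_one_of_char_ne_two fun h => by
    have := FiniteField.even_card_iff_char_two.mp h
    rw [Nat.odd_iff] at hodd
    omega
  obtain rfl : g = companionMatrix a := by
    ext i j
    rw [hg, companionMatrix, of_apply]
  obtain rfl : z = diagonal fun i : Fin m => if (i : ℕ) = (m - 1) / 2 then 1 else -1 := by
    ext i j
    rw [hz, diagonal_apply]
  rw [commutator_companionMatrix_eq a hk0 hk ha,
    det_diagonal_ite_one_neg_one (by omega), (Nat.Odd.sub_odd hmodd odd_one).neg_one_pow]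
  exact ⟨rfl, diagonal_mul_self_eq_one fun i => by split_ifs <;> simp,
    diagonal_ne_one (l := ⟨0, by omega⟩) (by rwa [if_neg hk0.ne]),
    companionCommutator_mul_self a hk0 hk, companionCommutator_ne_one hF a hk⟩
end

section
/- Let m ≥ 3 be odd and q a power of 2. With g the companion matrix of an irreducible polynomial x^m - a₁x^{m-1} - ⋯ - a_{m-1}x - 1 over F_q with determinant 1, and z the transvection which is the identity except for a 1 in position (1,2), the commutator [g,z] has order 4 in SL_m(F_q). -/
/-! With `Eᵢⱼ = single i j 1` (indices from `0`), the companion matrix `g` sends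
`e₀ ↦ e_{m-1}` (as `a₀ = 1`) and `e₁ ↦ e₀ + a₁ e_{m-1}`, and its row `1` is `e₂ᵀ`. The column
formulas put every `Eᵣᵣ` into `g · Mₘ(R)`, so `g` is invertible, and comparing `g (E₁₂ - a₁ E₀₂)`
with `E₀₁ g` gives `g⁻¹ E₀₁ g = E₁₂ - a₁ E₀₂`. Hence `[g, z] = 1 + N` with
`N = E₀₁ + E₁₂ - a₁ E₀₂`, where `N² = E₀₂ ≠ 0` and `N⁴ = 0`; in characteristic `2` the Frobenius
gives `(1 + N)^(2^k) = 1 + N^(2^k)`, so `1 + N` has order `4`. -/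

open Matrix

theorem orderOf_one_add_eq_four {R : Type*} [Ring R] [CharP R 2] {N : R}
    (h2 : N ^ 2 ≠ 0) (h4 : N ^ 4 = 0) : orderOf (1 + N) = 4 := by
  have hpow (k : ℕ) : (1 + N) ^ 2 ^ k = 1 + N ^ 2 ^ k := by
    rw [add_pow_char_pow_of_commute 2 k (Commute.one_left N), one_pow]
  refine orderOf_eq_prime_pow (p := 2) (n := 1) ?_ ?_
  · rw [hpow]; simpa using h2
  · rw [hpow]; simpa using h4

section Companion

variable {R : Type*} {m : ℕ}

def companion [Zero R] [One R] (a : Fin m → R) : Matrix (Fin m) (Fin m) R :=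
  of fun i j => if (i : ℕ) + 1 = j then 1 else if (i : ℕ) = m - 1 then a j else 0

variable {n : Type*} [DecidableEq n]

theorem single_mul_companion [Semiring R] (a : Fin m → R) {i j : Fin m} (hij : (i : ℕ) + 1 = j)
    (k : n) : single k i (1 : R) * companion a = single k j 1 := by
  ext r s
  by_cases hr : r = k
  · subst hr
    simp only [companion, single_mul_apply_same, of_apply, mul_ite, mul_one, one_mul, mul_zero,
      single_apply, Fin.ext_iff, true_and]
    have := j.isLt
    split_ifs <;> first | rfl | omega
  · simp [hr, single_apply_of_row_ne (Ne.symm hr)]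

theorem companion_mul_single_of_val_eq_zero [Semiring R] (a : Fin m → R) {i L : Fin m}
    (hi : (i : ℕ) = 0) (hL : (L : ℕ) = m - 1) (k : n) :
    companion a * single i k (1 : R) = a i • single L k 1 := by
  ext r s
  by_cases hs : s = k
  · subst hs
    simp only [companion, mul_single_apply_same, of_apply, hi, Nat.add_eq_zero_iff, one_ne_zero,
      and_false, ↓reduceIte, mul_one, Matrix.smul_apply, single_apply, Fin.ext_iff, hL, and_true,
      smul_eq_mul, mul_ite, mul_zero]
    split_ifs <;> first | rfl | omega
  · simp [hs, single_apply_of_col_ne _ _ (Ne.symm hs)]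

theorem companion_mul_single_of_val_succ [Semiring R] (a : Fin m → R) {i j L : Fin m}
    (hij : (i : ℕ) + 1 = j) (hL : (L : ℕ) = m - 1) (k : n) :
    companion a * single j k (1 : R) = single i k 1 + a j • single L k 1 := by
  ext r s
  by_cases hs : s = k
  · subst hs
    simp only [companion, mul_single_apply_same, of_apply, mul_one, smul_single, smul_eq_mul,
      Matrix.add_apply, single_apply, Fin.ext_iff, and_true, hL]
    have := j.isLt
    split_ifs <;> first | omega | simp
  · simp [hs, single_apply_of_col_ne _ _ (Ne.symm hs)]

theorem exists_companion_mul_eq_one [CommRing R] (a : Fin m → R) {i₀ : Fin m}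
    (hi₀ : (i₀ : ℕ) = 0) (ha : IsUnit (a i₀)) : ∃ X, companion a * X = 1 := by
  have hL : (⟨m - 1, by omega⟩ : Fin m).val = m - 1 := rfl
  have single_mem (r : Fin m) : ∃ X, companion a * X = single r r 1 := by
    by_cases hr : (r : ℕ) = m - 1
    · refine ⟨(↑ha.unit⁻¹ : R) • single i₀ r 1, ?_⟩
      rw [Matrix.mul_smul, companion_mul_single_of_val_eq_zero a hi₀ hr, smul_smul,
        IsUnit.val_inv_mul, one_smul]
    · let j : Fin m := ⟨r + 1, by omega⟩
      refine ⟨single j r 1 - (a j * ↑ha.unit⁻¹) • single i₀ r 1, ?_⟩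
      rw [mul_sub, Matrix.mul_smul, companion_mul_single_of_val_succ a rfl hL,
        companion_mul_single_of_val_eq_zero a hi₀ hL, smul_smul, mul_assoc,
        IsUnit.val_inv_mul, mul_one, add_sub_cancel_right]
  choose X hX using single_mem
  exact ⟨∑ r, X r, by rw [Matrix.mul_sum]; simp only [hX, sum_single_one]⟩

theorem companion_mul_sub_eq_single_mul_companion [CommRing R] (a : Fin m → R)
    {i₀ i₁ i₂ : Fin m} (hi₀ : (i₀ : ℕ) = 0) (hi₁ : (i₁ : ℕ) = 1) (hi₂ : (i₂ : ℕ) = 2)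
    (ha : a i₀ = 1) :
    companion a * (single i₁ i₂ 1 - a i₁ • single i₀ i₂ 1) = single i₀ i₁ 1 * companion a := by
  have hL : (⟨m - 1, by omega⟩ : Fin m).val = m - 1 := rfl
  rw [mul_sub, Matrix.mul_smul, companion_mul_single_of_val_succ a (i := i₀) (by omega) hL,
    companion_mul_single_of_val_eq_zero a hi₀ hL, ha, one_smul,
    single_mul_companion a (i := i₁) (j := i₂) (by omega), add_sub_cancel_right]

theorem companion_commutator_single [CommRing R] (a : Fin m → R)
    {i₀ i₁ i₂ : Fin m} (hi₀ : (i₀ : ℕ) = 0) (hi₁ : (i₁ : ℕ) = 1) (hi₂ : (i₂ : ℕ) = 2)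
    (ha : a i₀ = 1) :
    (companion a)⁻¹ * (1 + single i₀ i₁ 1) * companion a * (1 + single i₀ i₁ 1) =
      1 + (single i₀ i₁ 1 + single i₁ i₂ 1 - a i₁ • single i₀ i₂ 1) := by
  obtain ⟨X, hX⟩ := exists_companion_mul_eq_one a hi₀ (ha ▸ isUnit_one)
  have hinv : (companion a)⁻¹ * companion a = 1 := by
    rw [Matrix.inv_eq_right_inv hX, mul_eq_one_comm.mp hX]
  have hconj : (companion a)⁻¹ * single i₀ i₁ 1 * companion a =
      single i₁ i₂ 1 - a i₁ • single i₀ i₂ 1 := by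
    rw [mul_assoc, ← companion_mul_sub_eq_single_mul_companion a hi₀ hi₁ hi₂ ha, ← mul_assoc,
      hinv, one_mul]
  have h20 : i₂ ≠ i₀ := by rw [Ne, Fin.ext_iff]; omega
  rw [mul_add (companion a)⁻¹ 1, mul_one, add_mul, hinv, hconj]
  simp only [add_mul, mul_add, sub_mul, smul_mul_assoc, one_mul, mul_one,
    single_mul_single_of_ne _ _ _ _ h20, smul_zero]
  abel

end Companion

theorem sq_single_add_single_sub_smul_single {R n : Type*} [CommRing R] [Fintype n]
    [DecidableEq n] {i j k : n} (hij : i ≠ j) (hjk : j ≠ k) (hik : i ≠ k) (c : R) :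
    (single i j (1 : R) + single j k 1 - c • single i k 1) ^ 2 = single i k 1 := by
  simp [sq, add_mul, mul_add, sub_mul, mul_sub,
    single_mul_single_of_ne _ _ _ _ hij.symm, single_mul_single_of_ne _ _ _ _ hjk.symm,
    single_mul_single_of_ne _ _ _ _ hik.symm]

open Polynomial

/-- Let `q` be a power of `2`, `m ≥ 3` odd, `g` the companion matrix of an
irreducible polynomial `X^m - a_{m-1}X^{m-1} - ⋯ - a₁X - 1` over `F_q`
(bottom row `a` with `a 0 = 1`, determinant 1), and `z = I + E₁₂` the
transvection. Then the commutator `[g,z] = g⁻¹zgz` has order `4`. -/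
theorem companion_commutator_order_four {F : Type*} [Field F]
    (hchar : ringChar F = 2)
    (m : ℕ) (hm : 3 ≤ m)
    (a : Fin m → F) (ha : a ⟨0, by omega⟩ = 1)
    (g z : Matrix (Fin m) (Fin m) F)
    (hg : ∀ i j : Fin m, g i j =
      if (i : ℕ) + 1 = (j : ℕ) then 1
      else if (i : ℕ) = m - 1 then a j else 0)
    (hz : ∀ i j : Fin m, z i j =
      if i = j then 1 else if (i : ℕ) = 0 ∧ (j : ℕ) = 1 then 1 else 0) :
    orderOf (g⁻¹ * z * g * z) = 4 := by
  let i₀ : Fin m := ⟨0, by omega⟩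
  let i₁ : Fin m := ⟨1, by omega⟩
  let i₂ : Fin m := ⟨2, by omega⟩
  have hg : g = companion a := Matrix.ext hg
  have hz : z = 1 + single i₀ i₁ 1 := by
    ext i j
    rw [hz, Matrix.add_apply, one_apply, single_apply]
    simp only [i₀, i₁, Fin.ext_iff]
    split_ifs <;> first | omega | simp
  have : CharP F 2 := ringChar.eq_iff.mp hchar
  have : NeZero m := ⟨by omega⟩
  have hsq := sq_single_add_single_sub_smul_single (i := i₀) (j := i₁) (k := i₂)
    (by simp [i₀, i₁, Fin.ext_iff]) (by simp [i₁, i₂, Fin.ext_iff])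
    (by simp [i₀, i₂, Fin.ext_iff]) (a i₁)
  rw [hg, hz, companion_commutator_single a (i₀ := i₀) (i₁ := i₁) (i₂ := i₂) rfl rfl rfl ha]
  refine orderOf_one_add_eq_four ?_ ?_
  · rw [hsq]
    intro h
    simpa using congrFun (congrFun h i₀) i₂
  · rw [show 4 = 2 * 2 from rfl, pow_mul, hsq, sq,
      single_mul_single_of_ne _ _ _ _ (by simp [i₀, i₂, Fin.ext_iff])]
end
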